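/- arXiv:2102.02727 — 5 statements merged into one kernel-verified Lean document; each statement's English description precedes it below -/
import Mathlib

section
/- For two binary m×m arrays X and Y, the single-row-deletion balls D_{1,0}(X) and D_{1,0}(Y) are disjoint if and only if the single-row-insertion balls I_{1,0}(X) and I_{1,0}(Y) are disjoint. -/
/-- `E` is obtained from `X` by deleting rows and columns (keeping relative order). -/
def IsSubArray {r1 c1 r2 c2 : ℕ} (E : Matrix (Fin r1) (Fin c1) Bool)
    (X : Matrix (Fin r2) (Fin c2) Bool) : Prop :=
  ∃ f : Fin r1 → Fin r2, ∃ g : Fin c1 → Fin c2,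
    StrictMono f ∧ StrictMono g ∧ ∀ i j, E i j = X (f i) (g j)

/-! A strictly monotone self-map of `Fin m` is the identity, so no column of an `m × m` array can
be deleted: the array is a word of length `m` over the alphabet of its rows, and `IsSubArray`
becomes `List.Sublist`. For words the statement is Levenshtein's observation. A word one letter
longer (shorter) than `e` is `l₁ ++ a :: l₂` with `e = l₁ ++ l₂`; comparing the two positions,
`l ++ b :: (t ++ d)` and `l ++ t ++ a :: d` both embed in `l ++ b :: (t ++ a :: d)`, and
conversely two one-letter deletions from a common word either coincide or leave words
`l ++ t ++ a :: d` and `l ++ b :: t ++ d` with the common subsequence `l ++ t ++ d`. -/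

namespace List

variable {α : Type*}

theorem exists_ofFn_eq_of_length_eq {l : List α} {n : ℕ} (h : l.length = n) :
    ∃ f : Fin n → α, ofFn f = l := by
  subst h
  exact ⟨l.get, ofFn_get l⟩

theorem ofFn_sublist_ofFn_iff {m n : ℕ} {f : Fin m → α} {g : Fin n → α} :
    ofFn f <+ ofFn g ↔ ∃ h : Fin m → Fin n, StrictMono h ∧ ∀ i, f i = g (h i) := by
  rw [sublist_iff_exists_fin_orderEmbedding_get_eq]
  constructor
  · rintro ⟨e, he⟩
    refine ⟨fun i => Fin.cast length_ofFn (e (Fin.cast length_ofFn.symm i)), ?_, fun i => ?_⟩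
    · exact (Fin.cast_strictMono _).comp (e.strictMono.comp (Fin.cast_strictMono _))
    · simpa only [get_ofFn, Fin.cast_cast, Fin.cast_eq_self] using he (Fin.cast length_ofFn.symm i)
  · rintro ⟨h, hh, hfg⟩
    refine ⟨(Fin.castOrderIso length_ofFn).toOrderEmbedding.trans
      ((OrderEmbedding.ofStrictMono h hh).trans
        (Fin.castOrderIso length_ofFn.symm).toOrderEmbedding), fun i => ?_⟩
    simp [hfg, Fin.cast]

theorem Sublist.exists_eq_append_cons_append {e x : List α} (h : e <+ x)
    (hlen : x.length = e.length + 1) : ∃ l₁ a l₂, e = l₁ ++ l₂ ∧ x = l₁ ++ a :: l₂ := by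
  induction h with
  | slnil => simp at hlen
  | @cons e x a h _ =>
    exact ⟨[], a, e, rfl, by rw [h.eq_of_length (by simpa using hlen.symm)]; rfl⟩
  | @cons_cons e x a _ ih =>
    obtain ⟨l₁, b, l₂, rfl, rfl⟩ := ih (by simpa using hlen)
    exact ⟨a :: l₁, b, l₂, rfl, rfl⟩

theorem exists_common_subsequence {f x y : List α} (hx : x <+ f) (hy : y <+ f)
    (hxl : f.length = x.length + 1) (hyl : f.length = y.length + 1) :
    ∃ e, e.length = x.length - 1 ∧ e <+ x ∧ e <+ y := by
  obtain ⟨l₁, b, x₂, rfl, rfl⟩ := hx.exists_eq_append_cons_append hxl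
  obtain ⟨y₁, a, y₂, rfl, hf⟩ := hy.exists_eq_append_cons_append hyl
  rcases append_eq_append_iff.mp hf with ⟨t, rfl, ht⟩ | ⟨t, rfl, ht⟩
    <;> rcases cons_eq_append_iff.mp ht with ⟨rfl, ⟨⟩⟩ | ⟨t, rfl, rfl⟩
  · exact ⟨(l₁ ++ x₂).tail, by simp, tail_sublist _, by simpa using tail_sublist _⟩
  · exact ⟨l₁ ++ t ++ y₂, by simp only [length_append, length_cons]; omega, by simp, by simp⟩
  · exact ⟨(y₁ ++ x₂).tail, by simp, by simpa using tail_sublist _, tail_sublist _⟩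
  · exact ⟨y₁ ++ t ++ x₂, by simp only [length_append, length_cons]; omega, by simp, by simp⟩

theorem exists_common_supersequence {e x y : List α} (hx : e <+ x) (hy : e <+ y)
    (hxl : x.length = e.length + 1) (hyl : y.length = e.length + 1) :
    ∃ f, f.length = x.length + 1 ∧ x <+ f ∧ y <+ f := by
  obtain ⟨l₁, b, l₂, rfl, rfl⟩ := hx.exists_eq_append_cons_append hxl
  obtain ⟨d₁, a, d₂, he, rfl⟩ := hy.exists_eq_append_cons_append hyl
  rcases append_eq_append_iff.mp he with ⟨t, rfl, rfl⟩ | ⟨t, rfl, rfl⟩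
  · exact ⟨l₁ ++ b :: (t ++ a :: d₂), by simp; omega, by simp, by simp⟩
  · exact ⟨d₁ ++ a :: (t ++ b :: l₂), by simp; omega, by simp, by simp⟩

end List

theorem isSubArray_iff_ofFn_sublist {r₁ r₂ c : ℕ} (E : Matrix (Fin r₁) (Fin c) Bool)
    (X : Matrix (Fin r₂) (Fin c) Bool) :
    IsSubArray E X ↔ (List.ofFn fun i => E i).Sublist (List.ofFn fun i => X i) := by
  rw [List.ofFn_sublist_ofFn_iff]
  constructor
  · rintro ⟨f, g, hf, hg, h⟩
    obtain rfl := hg.eq_id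
    exact ⟨f, hf, fun i => funext (h i)⟩
  · rintro ⟨f, hf, h⟩
    exact ⟨f, id, hf, strictMono_id, fun i => congrFun (h i)⟩

/-- The single-row-deletion balls of `X` and `Y` are disjoint iff their
single-row-insertion balls are disjoint. -/
theorem single_row_indel_equivalence (m : ℕ) (X Y : Matrix (Fin m) (Fin m) Bool) :
    (∀ E : Matrix (Fin (m - 1)) (Fin m) Bool, ¬(IsSubArray E X ∧ IsSubArray E Y)) ↔
    (∀ F : Matrix (Fin (m + 1)) (Fin m) Bool, ¬(IsSubArray X F ∧ IsSubArray Y F)) := by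
  simp only [← not_exists, not_iff_not, isSubArray_iff_ofFn_sublist]
  rcases m.eq_zero_or_pos with rfl | hm
  · exact ⟨fun _ => ⟨fun _ => default, by simp⟩, fun _ => ⟨fun _ => default, by simp⟩⟩
  constructor
  · rintro ⟨E, hX, hY⟩
    obtain ⟨f, hf, hXf, hYf⟩ :=
      List.exists_common_supersequence hX hY (by simp; omega) (by simp; omega)
    obtain ⟨F, rfl⟩ := List.exists_ofFn_eq_of_length_eq (n := m + 1) (by simpa using hf)
    exact ⟨F, hXf, hYf⟩
  · rintro ⟨F, hX, hY⟩
    obtain ⟨e, he, hXe, hYe⟩ := List.exists_common_subsequence hX hY (by simp) (by simp)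
    obtain ⟨E, rfl⟩ := List.exists_ofFn_eq_of_length_eq (n := m - 1) (by simpa using he)
    exact ⟨E, hXe, hYe⟩
end

section
/- For binary arrays X of size (m+1)×m and Y of size m×(m+1), the intersection D_{1,0}(X) ∩ D_{0,1}(Y) is empty if and only if the intersection I_{0,1}(X) ∩ I_{1,0}(Y) is empty, where D_{1,0}(X) is the set of m×m arrays obtained by deleting one row from X, D_{0,1}(Y) the set of m×m arrays obtained by deleting one column from Y, I_{0,1}(X) the set of (m+1)×(m+1) arrays obtained by inserting one column into X, and I_{1,0}(Y) the set of (m+1)×(m+1) arrays obtained by inserting one row into Y. -/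
/-- A strictly monotone self-map of `Fin n` is the identity. -/
lemma strictMono_fin_id {n : ℕ} {f : Fin n → Fin n} (hf : StrictMono f) : f = id := by
  haveI : WellFoundedLT (Fin n) := inferInstance
  have hid : StrictMono (id : Fin n → Fin n) := strictMono_id
  have h := (StrictMono.range_inj (β := Fin n) (γ := Fin n) (f := f) (g := id) hf hid).1
  exact h (by
    rw [Set.range_id, Set.range_eq_univ.mpr (Finite.surjective_of_injective hf.injective)])

/-- For `X : (m+1)×m` and `Y : m×(m+1)`,
`D_{1,0}(X) ∩ D_{0,1}(Y) = ∅ ↔ I_{0,1}(X) ∩ I_{1,0}(Y) = ∅`. -/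
theorem mixed_indel_equivalence (m : ℕ)
    (X : Matrix (Fin (m + 1)) (Fin m) Bool) (Y : Matrix (Fin m) (Fin (m + 1)) Bool) :
    (∀ E : Matrix (Fin m) (Fin m) Bool, ¬(IsSubArray E X ∧ IsSubArray E Y)) ↔
    (∀ F : Matrix (Fin (m + 1)) (Fin (m + 1)) Bool, ¬(IsSubArray X F ∧ IsSubArray Y F)) := by
  constructor
  · -- no common deletion → no common insertion
    intro hE F ⟨⟨f1, g1, hf1, hg1, hXF⟩, ⟨f2, g2, hf2, hg2, hYF⟩⟩
    have hf1id : f1 = id := strictMono_fin_id hf1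
    have hg2id : g2 = id := strictMono_fin_id hg2
    subst hf1id hg2id
    refine hE (fun p q => F (f2 p) (g1 q)) ⟨⟨f2, id, hf2, strictMono_id, ?_⟩,
      ⟨id, g1, strictMono_id, hg1, ?_⟩⟩
    · intro p q
      exact (hXF (f2 p) q).symm
    · intro p q
      exact (hYF p (g1 q)).symm
  · -- no common insertion → no common deletion
    intro hF E ⟨⟨f1, g1, hf1, hg1, hEX⟩, ⟨f2, g2, hf2, hg2, hEY⟩⟩
    have hg1id : g1 = id := strictMono_fin_id hg1
    have hf2id : f2 = id := strictMono_fin_id hf2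
    subst hg1id hf2id
    simp only [id] at hEX hEY
    -- build the common supersequence F
    set F : Matrix (Fin (m + 1)) (Fin (m + 1)) Bool := fun a b =>
      if ha : ∃ p, f1 p = a then Y ha.choose b
      else if hb : ∃ q, g2 q = b then X a hb.choose
      else false with hFdef
    refine hF F ⟨⟨id, g2, strictMono_id, hg2, ?_⟩, ⟨f1, id, hf1, strictMono_id, ?_⟩⟩
    · intro a q
      show X a q = F a (g2 q)
      simp only [hFdef]
      split_ifs with ha hb
      · -- a = f1 p for p = ha.choose
        rw [← hEY ha.choose q, hEX ha.choose q, ha.choose_spec]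
      · rw [hg2.injective hb.choose_spec]
      · exact absurd ⟨q, rfl⟩ hb
    · intro p b
      show Y p b = F (f1 p) b
      simp only [hFdef]
      have ha : ∃ p', f1 p' = f1 p := ⟨p, rfl⟩
      rw [dif_pos ha, hf1.injective ha.choose_spec]
end

section
/- Let t ≥ 1. A code C of binary n×n arrays is a t-criss-cross deletion-correcting code if and only if it is a t-criss-cross insertion-correcting code. Equivalently: for all distinct X1, X2 ∈ C and all nonnegative t_r, t_c with t_r + t_c = t, D_{t_r,t_c}(X1) ∩ D_{t_r,t_c}(X2) = ∅ holds for all such (t_r,t_c) if and only if I_{t_r,t_c}(X1) ∩ I_{t_r,t_c}(X2) = ∅ holds for all such (t_r,t_c). -/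
open Finset

namespace CrissCross

section Rank

variable {α : Type*} [LinearOrder α]

def rank (S : Finset α) (x : α) : ℕ := #{y ∈ S | y < x}

lemma rank_mono (S : Finset α) : Monotone (rank S) := fun _ _ hxy =>
  card_le_card <| monotone_filter_right S fun _ _ hy => hy.trans_le hxy

lemma rank_lt_rank {S : Finset α} {x y : α} (hx : x ∈ S) (hxy : x < y) : rank S x < rank S y :=
  card_lt_card <| (ssubset_iff_of_subset (monotone_filter_right S fun _ _ hz => hz.trans hxy)).2
    ⟨x, mem_filter.2 ⟨hx, hxy⟩, fun h => lt_irrefl x (mem_filter.1 h).2⟩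

lemma rank_strictMonoOn (S : Finset α) : StrictMonoOn (rank S) S := fun _ hx _ _ hxy =>
  rank_lt_rank hx hxy

lemma rank_lt_card {S : Finset α} {x : α} (hx : x ∈ S) : rank S x < #S :=
  card_lt_card <| (ssubset_iff_of_subset (filter_subset _ S)).2
    ⟨x, hx, fun h => lt_irrefl x (mem_filter.1 h).2⟩

lemma rank_image_apply {m : ℕ} {f : Fin m → α} (hf : StrictMono f) (c : Fin m) :
    rank (univ.image f) (f c) = c := by
  rw [rank, filter_image, card_image_of_injective _ hf.injective]
  simp only [hf.lt_iff_lt, filter_gt_eq_Iio, Fin.card_Iio]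

end Rank

theorem exists_strictMono_pullback {n N T : ℕ} (hN : N ≤ n + T) {w₁ w₂ : Fin n → Fin N}
    (hw₁ : StrictMono w₁) (hw₂ : StrictMono w₂) :
    ∃ e₁ e₂ : Fin (n - T) → Fin n, StrictMono e₁ ∧ StrictMono e₂ ∧
      ∀ i, w₁ (e₁ i) = w₂ (e₂ i) := by
  have hcard : n - T ≤ #(univ.image w₁ ∩ univ.image w₂) := by
    have hunion := card_union_add_card_inter (univ.image w₁) (univ.image w₂)
    have := (card_le_univ (univ.image w₁ ∪ univ.image w₂)).trans_eq (Fintype.card_fin N)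
    rw [card_image_of_injective _ hw₁.injective, card_image_of_injective _ hw₂.injective,
      card_fin] at hunion
    omega
  obtain ⟨S, hS, hcardS⟩ := exists_subset_card_eq hcard
  set e := S.orderEmbOfFin hcardS
  have hmem : ∀ i, e i ∈ univ.image w₁ ∩ univ.image w₂ := fun i => hS (orderEmbOfFin_mem _ _ i)
  choose e₁ he₁ using fun i => mem_image.1 (mem_inter.1 (hmem i)).1
  choose e₂ he₂ using fun i => mem_image.1 (mem_inter.1 (hmem i)).2
  refine ⟨e₁, e₂, fun i j hij => ?_, fun i j hij => ?_, fun i => (he₁ i).2.trans (he₂ i).2.symm⟩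
  · rw [← hw₁.lt_iff_lt, (he₁ i).2, (he₁ j).2]; exact e.strictMono hij
  · rw [← hw₂.lt_iff_lt, (he₂ i).2, (he₂ j).2]; exact e.strictMono hij

section Pushout

variable {m n : ℕ}

/-- Sorting key of `a` in the amalgamation of two copies tagged `s = 0, 1`: first the gap of `R`
containing `a`; within a gap the elements of copy `0` come first, and the element of `R` closing
the gap comes last with the tag-free key `(rank, 2, 0)`, which identifies corresponding elements
of the two copies. -/
def mergeKey (R : Finset (Fin n)) (s : ℕ) (a : Fin n) : ℕ ×ₗ ℕ ×ₗ ℕ :=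
  toLex (rank R a, if a ∈ R then toLex (2, 0) else toLex (s, (a : ℕ)))

lemma mergeKey_strictMono (R : Finset (Fin n)) {s : ℕ} (hs : s < 2) :
    StrictMono (mergeKey R s) := by
  intro a b hab
  rcases (rank_mono R hab.le).lt_or_eq with hlt | heq
  · exact Prod.Lex.toLex_lt_toLex.2 (Or.inl hlt)
  · have ha : a ∉ R := fun ha => (rank_lt_rank ha hab).ne heq
    refine Prod.Lex.toLex_lt_toLex.2 (Or.inr ⟨heq, ?_⟩)
    simp only [if_neg ha]
    split_ifs
    · exact Prod.Lex.toLex_lt_toLex.2 (Or.inl hs)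
    · exact Prod.Lex.toLex_lt_toLex.2 (Or.inr ⟨rfl, hab⟩)

lemma mergeKey_one_eq_mergeKey_zero_iff {R R' : Finset (Fin n)} {a a' : Fin n} :
    mergeKey R 1 a = mergeKey R' 0 a' ↔ a ∈ R ∧ a' ∈ R' ∧ rank R a = rank R' a' := by
  unfold mergeKey
  split_ifs <;> simp [*]

lemma mergeKey_image_eq_mergeKey_image_iff {f₁ f₂ : Fin m → Fin n} (hf₁ : StrictMono f₁)
    (hf₂ : StrictMono f₂) {a a' : Fin n} :
    mergeKey (univ.image f₁) 1 a = mergeKey (univ.image f₂) 0 a' ↔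
      ∃ c, a = f₁ c ∧ a' = f₂ c := by
  rw [mergeKey_one_eq_mergeKey_zero_iff]
  constructor
  · rintro ⟨ha, ha', hr⟩
    obtain ⟨c, -, rfl⟩ := mem_image.1 ha
    obtain ⟨c', -, rfl⟩ := mem_image.1 ha'
    rw [rank_image_apply hf₁, rank_image_apply hf₂] at hr
    exact ⟨c, rfl, by rw [Fin.ext hr]⟩
  · rintro ⟨c, rfl, rfl⟩
    exact ⟨mem_image_of_mem _ (mem_univ c), mem_image_of_mem _ (mem_univ c),
      by rw [rank_image_apply hf₁, rank_image_apply hf₂]⟩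

theorem exists_strictMono_pushout {f₁ f₂ : Fin m → Fin n} (hf₁ : StrictMono f₁)
    (hf₂ : StrictMono f₂) {N : ℕ} (hN : n + n ≤ N + m) :
    ∃ u₁ u₂ : Fin n → Fin N, StrictMono u₁ ∧ StrictMono u₂ ∧
      ∀ a a', u₁ a = u₂ a' → ∃ c, a = f₁ c ∧ a' = f₂ c := by
  set k₁ := mergeKey (univ.image f₁) 1
  set k₂ := mergeKey (univ.image f₂) 0
  have hk₁ : StrictMono k₁ := mergeKey_strictMono _ one_lt_two
  have hk₂ : StrictMono k₂ := mergeKey_strictMono _ zero_lt_two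
  have hk : ∀ a a', k₁ a = k₂ a' ↔ ∃ c, a = f₁ c ∧ a' = f₂ c := fun _ _ =>
    mergeKey_image_eq_mergeKey_image_iff hf₁ hf₂
  set S := univ.image k₁ ∪ univ.image k₂
  have hS : #S ≤ N := by
    have hcommon : m ≤ #(univ.image k₁ ∩ univ.image k₂) :=
      calc m = #(univ.image (k₁ ∘ f₁)) := by
            rw [card_image_of_injective _ (hk₁.comp hf₁).injective, card_fin]
        _ ≤ _ := card_le_card fun x hx => by
          obtain ⟨c, -, rfl⟩ := mem_image.1 hx
          exact mem_inter.2 ⟨mem_image_of_mem _ (mem_univ _),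
            mem_image.2 ⟨f₂ c, mem_univ _, ((hk _ _).2 ⟨c, rfl, rfl⟩).symm⟩⟩
    have : #S + #(univ.image k₁ ∩ univ.image k₂) = #(univ.image k₁) + #(univ.image k₂) :=
      card_union_add_card_inter _ _
    have := (card_image_le (s := univ) (f := k₁)).trans_eq (card_fin n)
    have := (card_image_le (s := univ) (f := k₂)).trans_eq (card_fin n)
    omega
  have hk₁S : ∀ a, k₁ a ∈ S := fun a => mem_union_left _ (mem_image_of_mem _ (mem_univ a))
  have hk₂S : ∀ a, k₂ a ∈ S := fun a => mem_union_right _ (mem_image_of_mem _ (mem_univ a))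
  refine ⟨fun a => ⟨rank S (k₁ a), (rank_lt_card (hk₁S a)).trans_le hS⟩,
    fun a => ⟨rank S (k₂ a), (rank_lt_card (hk₂S a)).trans_le hS⟩,
    fun a b hab => Fin.mk_lt_mk.2 (rank_lt_rank (hk₁S a) (hk₁ hab)),
    fun a b hab => Fin.mk_lt_mk.2 (rank_lt_rank (hk₂S a) (hk₂ hab)), fun a a' h => ?_⟩
  exact (hk a a').1 ((rank_strictMonoOn S).injOn (hk₁S a) (hk₂S a') (Fin.mk.inj h))

end Pushout

end CrissCross

open CrissCross

theorem IsSubArray.exists_common_subArray {r c tr tc : ℕ} {X₁ X₂ : Matrix (Fin r) (Fin c) Bool}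
    {F : Matrix (Fin (r + tr)) (Fin (c + tc)) Bool} (h₁ : IsSubArray X₁ F)
    (h₂ : IsSubArray X₂ F) :
    ∃ E : Matrix (Fin (r - tr)) (Fin (c - tc)) Bool, IsSubArray E X₁ ∧ IsSubArray E X₂ := by
  obtain ⟨w₁, x₁, hw₁, hx₁, hX₁⟩ := h₁
  obtain ⟨w₂, x₂, hw₂, hx₂, hX₂⟩ := h₂
  obtain ⟨e₁, e₂, he₁, he₂, he⟩ := exists_strictMono_pullback le_rfl hw₁ hw₂
  obtain ⟨k₁, k₂, hk₁, hk₂, hk⟩ := exists_strictMono_pullback le_rfl hx₁ hx₂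
  exact ⟨fun i j => X₁ (e₁ i) (k₁ j), ⟨e₁, k₁, he₁, hk₁, fun _ _ => rfl⟩,
    ⟨e₂, k₂, he₂, hk₂, fun i j => (hX₁ _ _).trans ((he i ▸ hk j ▸ hX₂ _ _).symm)⟩⟩

theorem IsSubArray.exists_common_superArray {r c tr tc : ℕ}
    {X₁ X₂ : Matrix (Fin r) (Fin c) Bool} {E : Matrix (Fin (r - tr)) (Fin (c - tc)) Bool}
    (h₁ : IsSubArray E X₁) (h₂ : IsSubArray E X₂) :
    ∃ F : Matrix (Fin (r + tr)) (Fin (c + tc)) Bool, IsSubArray X₁ F ∧ IsSubArray X₂ F := by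
  obtain ⟨f₁, g₁, hf₁, hg₁, hE₁⟩ := h₁
  obtain ⟨f₂, g₂, hf₂, hg₂, hE₂⟩ := h₂
  obtain ⟨u₁, u₂, hu₁, hu₂, hu⟩ := exists_strictMono_pushout hf₁ hf₂ (N := r + tr) (by omega)
  obtain ⟨v₁, v₂, hv₁, hv₂, hv⟩ := exists_strictMono_pushout hg₁ hg₂ (N := c + tc) (by omega)
  have hu₁v₁ := hu₁.injective.prodMap hv₁.injective
  have hu₂v₂ := hu₂.injective.prodMap hv₂.injective
  let F : Matrix (Fin (r + tr)) (Fin (c + tc)) Bool := fun i j =>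
    Function.extend (Prod.map u₁ v₁) (fun p => X₁ p.1 p.2)
      (Function.extend (Prod.map u₂ v₂) (fun p => X₂ p.1 p.2) fun _ => false) (i, j)
  refine ⟨F, ⟨u₁, v₁, hu₁, hv₁, fun a b => ?_⟩, ⟨u₂, v₂, hu₂, hv₂, fun a b => ?_⟩⟩
  · exact (hu₁v₁.extend_apply (fun p => X₁ p.1 p.2) _ (a, b)).symm
  change _ = Function.extend _ _ _ (u₂ a, v₂ b)
  by_cases h : ∃ p, Prod.map u₁ v₁ p = (u₂ a, v₂ b)
  · obtain ⟨⟨a₀, b₀⟩, hp⟩ := h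
    obtain ⟨ha₀, hb₀⟩ := Prod.mk.inj hp
    obtain ⟨i, rfl, rfl⟩ := hu a₀ a ha₀
    obtain ⟨j, rfl, rfl⟩ := hv b₀ b hb₀
    rw [← hp, hu₁v₁.extend_apply, ← hE₁, hE₂]
  · rw [Function.extend_apply' _ _ _ h]
    exact (hu₂v₂.extend_apply (fun p => X₂ p.1 p.2) _ (a, b)).symm

theorem crissCross_indel_equivalence_general (n t : ℕ)
    (C : Set (Matrix (Fin n) (Fin n) Bool)) :
    (∀ tr tc : ℕ, tr + tc = t → ∀ X1 ∈ C, ∀ X2 ∈ C, X1 ≠ X2 →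
      ∀ E : Matrix (Fin (n - tr)) (Fin (n - tc)) Bool,
        ¬(IsSubArray E X1 ∧ IsSubArray E X2)) ↔
    (∀ tr tc : ℕ, tr + tc = t → ∀ X1 ∈ C, ∀ X2 ∈ C, X1 ≠ X2 →
      ∀ F : Matrix (Fin (n + tr)) (Fin (n + tc)) Bool,
        ¬(IsSubArray X1 F ∧ IsSubArray X2 F)) := by
  constructor
  · rintro hdel tr tc htc X1 hX1 X2 hX2 hne F ⟨hF1, hF2⟩
    obtain ⟨E, hE⟩ := hF1.exists_common_subArray hF2
    exact hdel tr tc htc X1 hX1 X2 hX2 hne E hE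
  · rintro hins tr tc htc X1 hX1 X2 hX2 hne E ⟨hE1, hE2⟩
    obtain ⟨F, hF⟩ := hE1.exists_common_superArray hE2
    exact hins tr tc htc X1 hX1 X2 hX2 hne F hF

/-- A code `C` of binary `n × n` arrays is a `t`-criss-cross deletion-correcting
code iff it is a `t`-criss-cross insertion-correcting code. -/
theorem crissCross_indel_equivalence (n t : ℕ) (ht : 1 ≤ t)
    (C : Set (Matrix (Fin n) (Fin n) Bool)) :
    (∀ tr tc : ℕ, tr + tc = t → ∀ X1 ∈ C, ∀ X2 ∈ C, X1 ≠ X2 →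
      ∀ E : Matrix (Fin (n - tr)) (Fin (n - tc)) Bool,
        ¬(IsSubArray E X1 ∧ IsSubArray E X2)) ↔
    (∀ tr tc : ℕ, tr + tc = t → ∀ X1 ∈ C, ∀ X2 ∈ C, X1 ≠ X2 →
      ∀ F : Matrix (Fin (n + tr)) (Fin (n + tc)) Bool,
        ¬(IsSubArray X1 F ∧ IsSubArray X2 F)) :=
  crissCross_indel_equivalence_general n t C
end

section
/- Let t ≥ 1, ℓ ≥ 1 with 2^ℓ > t+1, and w ≥ 1. The number of binary ℓ×w arrays satisfying the window constraint (every two columns at distance at most t are distinct) is at least 2^{ℓw} · (1 − (t+1)/2^ℓ)^w; hence the redundancy ℓw − log₂|W_{ℓ,w}| is at most −w·log₂(1 − (t+1)/2^ℓ). -/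
/-!
Build an array column by column, prepending each new column. If we insist that *all* pairs of
columns at distance at most `t` differ (a constraint stronger than the window constraint, and
one that is inherited by suffixes), a new column only has to avoid the at most `t` columns
that follow it, which leaves at least `2^ℓ - t ≥ 2^ℓ - (t + 1)` choices. The redundancy bound
is the base-2 logarithm of the resulting count.
-/

/-- Binary `ℓ × w` arrays (given by their columns) satisfying the window constraint. -/
def WindowSet (t ℓ w : ℕ) : Set (Fin w → (Fin ℓ → Bool)) :=
  {W | ∀ i j : Fin w, (i : ℕ) < w - t → (i : ℕ) < (j : ℕ) → (j : ℕ) ≤ (i : ℕ) + t → W i ≠ W j}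

open Finset

section WindowDistinct

variable {α : Type*}

def IsWindowDistinct (t : ℕ) {w : ℕ} (f : Fin w → α) : Prop :=
  ∀ i j : Fin w, (i : ℕ) < j → (j : ℕ) ≤ i + t → f i ≠ f j

instance [DecidableEq α] (t w : ℕ) : DecidablePred (IsWindowDistinct (α := α) t (w := w)) :=
  fun _ => by unfold IsWindowDistinct; infer_instance

theorem IsWindowDistinct.cons {t w : ℕ} {f : Fin w → α} (hf : IsWindowDistinct t f) {x : α}
    (hx : ∀ j : Fin w, (j : ℕ) < t → f j ≠ x) :
    IsWindowDistinct t (Fin.cons x f : Fin (w + 1) → α) := by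
  intro i j hij hjt
  induction j using Fin.cases with
  | zero => simp at hij
  | succ j =>
    induction i using Fin.cases with
    | zero => exact (hx j (by simp at hjt; omega)).symm
    | succ i => exact hf i j (by simpa using hij) (by simp at hjt; omega)

theorem card_image_filter_val_lt_le [DecidableEq α] {w : ℕ} (f : Fin w → α) (t : ℕ) :
    #((univ.filter fun j : Fin w => (j : ℕ) < t).image f) ≤ t :=
  card_image_le.trans (by simp [Fin.card_filter_val_lt])

variable [Fintype α] [DecidableEq α]

theorem pow_card_sub_le_card_isWindowDistinct (t w : ℕ) :
    (Fintype.card α - t) ^ w ≤ #(univ.filter (IsWindowDistinct (α := α) t (w := w))) := by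
  induction w with
  | zero => simp [IsWindowDistinct, Finset.Nonempty]
  | succ w ih =>
    set S := univ.filter (IsWindowDistinct (α := α) t (w := w))
    let free (f : Fin w → α) : Finset α := univ \ (univ.filter fun j : Fin w => (j : ℕ) < t).image f
    have hfree (f : Fin w → α) : Fintype.card α - t ≤ #(free f) := by
      rw [card_univ_sdiff]
      have := card_image_filter_val_lt_le f t
      omega
    calc (Fintype.card α - t) ^ (w + 1) ≤ ∑ f ∈ S, (Fintype.card α - t) := by
          rw [pow_succ, sum_const, smul_eq_mul]
          exact Nat.mul_le_mul_right _ ih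
      _ ≤ #(S.sigma free) := by
          rw [card_sigma]
          exact sum_le_sum fun f _ => hfree f
      _ ≤ _ := by
          refine card_le_card_of_injOn (fun p => Fin.cons p.2 p.1) ?_ ?_
          · intro ⟨f, x⟩ hp
            simp only [coe_sigma, Set.mem_sigma_iff, mem_coe, mem_filter, mem_univ, true_and,
              free, mem_sdiff, mem_image, not_exists, not_and, S] at hp ⊢
            exact hp.1.cons hp.2
          · intro ⟨f, x⟩ _ ⟨g, y⟩ _ h
            obtain ⟨rfl, rfl⟩ := Fin.cons_inj.mp h
            rfl

end WindowDistinct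

theorem isWindowDistinct_mem_windowSet {t ℓ w : ℕ} {W : Fin w → Fin ℓ → Bool}
    (hW : IsWindowDistinct t W) : W ∈ WindowSet t ℓ w :=
  fun i j _ => hW i j

theorem pow_sub_le_card_windowSet (t ℓ w : ℕ) :
    (2 ^ ℓ - t) ^ w ≤ Nat.card (WindowSet t ℓ w) := by
  calc (2 ^ ℓ - t) ^ w ≤ #(univ.filter (IsWindowDistinct (α := Fin ℓ → Bool) t (w := w))) := by
        simpa using pow_card_sub_le_card_isWindowDistinct (α := Fin ℓ → Bool) t w
    _ ≤ Nat.card (WindowSet t ℓ w) := by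
        rw [Nat.card_coe_set_eq, ← Set.ncard_coe_finset]
        refine Set.ncard_le_ncard (fun W hW => ?_) (Set.toFinite _)
        exact isWindowDistinct_mem_windowSet (by simpa using hW)

theorem windowSet_card_and_redundancy_general (t ℓ w : ℕ) (h2 : t + 1 < 2 ^ ℓ) :
    (2 : ℝ) ^ (ℓ * w) * (1 - (t + 1) / 2 ^ ℓ) ^ w ≤ (Nat.card ↥(WindowSet t ℓ w) : ℝ) ∧
    (ℓ * w : ℝ) - Real.logb 2 (Nat.card ↥(WindowSet t ℓ w)) ≤
      -(w * Real.logb 2 (1 - (t + 1) / 2 ^ ℓ)) := by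
  have hlt : (t : ℝ) + 1 < 2 ^ ℓ := by exact_mod_cast h2
  have hfrac : 0 < 1 - ((t : ℝ) + 1) / 2 ^ ℓ := by
    rw [sub_pos, div_lt_one (by positivity)]
    exact hlt
  have hcard : (2 : ℝ) ^ (ℓ * w) * (1 - (t + 1) / 2 ^ ℓ) ^ w ≤ Nat.card (WindowSet t ℓ w) :=
    calc (2 : ℝ) ^ (ℓ * w) * (1 - (t + 1) / 2 ^ ℓ) ^ w = (2 ^ ℓ - (t + 1)) ^ w := by
          rw [pow_mul, ← mul_pow, mul_sub, mul_one, mul_div_cancel₀ _ (by positivity)]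
      _ ≤ (((2 ^ ℓ - t) ^ w : ℕ) : ℝ) := by
          rw [Nat.cast_pow, Nat.cast_sub (by omega), Nat.cast_pow, Nat.cast_ofNat]
          exact pow_le_pow_left₀ (by linarith) (by linarith) w
      _ ≤ Nat.card (WindowSet t ℓ w) := by exact_mod_cast pow_sub_le_card_windowSet t ℓ w
  refine ⟨hcard, ?_⟩
  have hlog := Real.logb_le_logb_of_le one_lt_two (by positivity) hcard
  rw [Real.logb_mul (by positivity) (by positivity), Real.logb_pow, Real.logb_pow,
    Real.logb_self_eq_one one_lt_two] at hlog
  push_cast at hlog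
  linarith

/-- `|W_{ℓ,w}| ≥ 2^{ℓw}·(1 − (t+1)/2^ℓ)^w`, hence the redundancy
`ℓw − log₂ |W_{ℓ,w}|` is at most `−w·log₂(1 − (t+1)/2^ℓ)`. -/
theorem windowSet_card_and_redundancy (t ℓ w : ℕ) (ht : 1 ≤ t) (hl : 1 ≤ ℓ)
    (hw : 1 ≤ w) (h2 : t + 1 < 2 ^ ℓ) :
    (2 : ℝ) ^ (ℓ * w) * (1 - (t + 1) / 2 ^ ℓ) ^ w ≤ (Nat.card ↥(WindowSet t ℓ w) : ℝ) ∧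
    (ℓ * w : ℝ) - Real.logb 2 (Nat.card ↥(WindowSet t ℓ w)) ≤
      -(w * Real.logb 2 (1 - (t + 1) / 2 ^ ℓ)) :=
  windowSet_card_and_redundancy_general t ℓ w h2
end

section
/- Let L_s be the s×(t+1)² binary array consisting of s/(t+1) vertically stacked copies of L' = I_{t+1} ⊗ 1_{t+1}, where (t+1) divides s. Then for every row index i with 1 ≤ i ≤ s−t and every j with 1 ≤ j ≤ t, the rows i and i+j of L_s are distinct; moreover this remains true after deleting any t columns of L_s (i.e., every two rows at distance at most t still differ on the remaining columns). -/
/-- The locator array `L_s`: `s/(t+1)` vertically stacked copies of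
`L' = I_{t+1} ⊗ 1_{t+1}`; row `i` is the indicator of block `i mod (t+1)`. -/
def Ls (t s : ℕ) : Matrix (Fin s) (Fin ((t + 1) ^ 2)) Bool :=
  fun i j => decide ((j : ℕ) / (t + 1) = (i : ℕ) % (t + 1))

lemma Ls_key (t a : ℕ) (ha : a < t + 1)
    (g : Fin ((t + 1) ^ 2 - t) → Fin ((t + 1) ^ 2)) (hg : Function.Injective g) :
    ∃ j, ((g j : ℕ)) / (t + 1) = a := by
  classical
  set S : Finset (Fin ((t + 1) ^ 2)) :=
    Finset.univ.filter (fun j => (j : ℕ) / (t + 1) = a) with hS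
  have hf : ∀ k : Fin (t + 1), (t + 1) * a + (k : ℕ) < (t + 1) ^ 2 := by
    intro k
    have hk : (k : ℕ) < t + 1 := k.isLt
    have : (t + 1) * a + (k : ℕ) < (t + 1) * a + (t + 1) := by omega
    calc (t + 1) * a + (k : ℕ) < (t + 1) * a + (t + 1) := this
      _ ≤ (t + 1) * t + (t + 1) := by
          have : (t + 1) * a ≤ (t + 1) * t := Nat.mul_le_mul_left _ (by omega)
          omega
      _ ≤ (t + 1) ^ 2 := by ring_nf; nlinarith
  let f : Fin (t + 1) → Fin ((t + 1) ^ 2) := fun k => ⟨(t + 1) * a + (k : ℕ), hf k⟩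
  have hfinj : Function.Injective f := by
    intro x y hxy
    have := congrArg (fun z : Fin ((t + 1) ^ 2) => (z : ℕ)) hxy
    simp only [f] at this
    exact Fin.ext (by omega)
  have hfS : ∀ k, f k ∈ S := by
    intro k
    simp only [hS, Finset.mem_filter, Finset.mem_univ, true_and, f]
    have := Nat.mul_add_div (by omega : 0 < t + 1) a (k : ℕ)
    rw [this, Nat.div_eq_of_lt k.isLt]; omega
  have hcardS : t + 1 ≤ S.card := by
    have hsub : Finset.image f Finset.univ ⊆ S :=
      Finset.image_subset_iff.mpr (fun k _ => hfS k)
    have := Finset.card_le_card hsub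
    rwa [Finset.card_image_of_injective _ hfinj, Finset.card_univ, Fintype.card_fin] at this
  set R : Finset (Fin ((t + 1) ^ 2)) := Finset.univ.image g with hR
  have hcardR : R.card = (t + 1) ^ 2 - t := by
    rw [hR, Finset.card_image_of_injective _ hg, Finset.card_univ, Fintype.card_fin]
  have hunion : (S ∪ R).card ≤ (t + 1) ^ 2 := by
    have := Finset.card_le_univ (S ∪ R)
    simpa using this
  have hint : 0 < (S ∩ R).card := by
    have h1 := Finset.card_union_add_card_inter S R
    have ht : t ≤ (t + 1) ^ 2 := by nlinarith
    omega
  obtain ⟨x, hx⟩ := Finset.card_pos.mp hint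
  rw [Finset.mem_inter] at hx
  obtain ⟨hxS, hxR⟩ := hx
  rw [hR, Finset.mem_image] at hxR
  obtain ⟨j, _, hj⟩ := hxR
  refine ⟨j, ?_⟩
  rw [hj]
  simpa [hS] using hxS

lemma Ls_mod_ne {t : ℕ} {i i' : ℕ} (h1 : i < i') (h2 : i' ≤ i + t) :
    i % (t + 1) ≠ i' % (t + 1) := by
  intro h
  have hd : (t + 1) ∣ i' - i := (Nat.modEq_iff_dvd' h1.le).mp h
  have := Nat.le_of_dvd (by omega) hd
  omega

/-- Any two rows of `L_s` whose indices differ by at most `t` are distinct,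
and remain distinct after deleting any `t` columns. -/
theorem Ls_close_rows_distinct (t s : ℕ) (hs : (t + 1) ∣ s) :
    (∀ i i' : Fin s, (i : ℕ) < (i' : ℕ) → (i' : ℕ) ≤ (i : ℕ) + t →
      (fun j => Ls t s i j) ≠ (fun j => Ls t s i' j)) ∧
    (∀ g : Fin ((t + 1) ^ 2 - t) → Fin ((t + 1) ^ 2), StrictMono g →
      ∀ i i' : Fin s, (i : ℕ) < (i' : ℕ) → (i' : ℕ) ≤ (i : ℕ) + t →
        ∃ j, Ls t s i (g j) ≠ Ls t s i' (g j)) := by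
  have main : ∀ g : Fin ((t + 1) ^ 2 - t) → Fin ((t + 1) ^ 2), Function.Injective g →
      ∀ i i' : Fin s, (i : ℕ) < (i' : ℕ) → (i' : ℕ) ≤ (i : ℕ) + t →
        ∃ j, Ls t s i (g j) ≠ Ls t s i' (g j) := by
    intro g hg i i' h1 h2
    obtain ⟨j, hj⟩ := Ls_key t ((i : ℕ) % (t + 1)) (Nat.mod_lt _ (by omega)) g hg
    refine ⟨j, ?_⟩
    have hne := Ls_mod_ne h1 h2
    simp only [Ls, hj, decide_eq_true_eq]
    simp [hne]
  constructor
  · intro i i' h1 h2 heq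
    have hle : (t + 1) ^ 2 - t ≤ (t + 1) ^ 2 := Nat.sub_le _ _
    obtain ⟨j, hj⟩ := main (Fin.castLE hle) (Fin.castLE_injective hle) i i' h1 h2
    exact hj (congrFun heq _)
  · intro g hg; exact main g hg.injective
end
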